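/- (Projective Pythagoras' theorem) Suppose U, V, W are nonzero vectors with a_U, a_V, a_W all nonzero, and suppose the projective lines WU and WV are perpendicular, i.e. a_W·b_{UV} − b_{UW}·b_{VW} = 0. Then the projective quadrances q_w = q(U,V), q_u = q(V,W), q_v = q(U,W) satisfy q_w = q_u + q_v − q_u·q_v. -/
import Mathlib


/-- The projective quadrance between the projective points `[U]` and `[V]`. -/
def projQuadrance {F : Type*} [Field F] {M : Type*} [AddCommGroup M] [Module F M]
    (B : LinearMap.BilinForm F M) (U V : M) : F :=
  1 - (B U V) ^ 2 / (B U U * B V V)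

/-- The projective spread between the projective lines `WU` and `WV`
(the spread at the vertex `[W]`). -/
def projSpread {F : Type*} [Field F] {M : Type*} [AddCommGroup M] [Module F M]
    (B : LinearMap.BilinForm F M) (W U V : M) : F :=
  1 - (B W W * B U V - B U W * B V W) ^ 2 /
      ((B U U * B W W - (B U W) ^ 2) * (B V V * B W W - (B V W) ^ 2))

theorem projective_pythagoras_theorem
    {F : Type*} [Field F] (hchar : (2 : F) ≠ 0)
    {M : Type*} [AddCommGroup M] [Module F M]
    (B : LinearMap.BilinForm F M) (hsym : ∀ x y : M, B x y = B y x)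
    (U V W : M) (hU : U ≠ 0) (hV : V ≠ 0) (hW : W ≠ 0)
    (haU : B U U ≠ 0) (haV : B V V ≠ 0) (haW : B W W ≠ 0)
    (hperp : B W W * B U V - B U W * B V W = 0) :
    projQuadrance B U V =
      projQuadrance B V W + projQuadrance B U W -
        projQuadrance B V W * projQuadrance B U W := by
  have huv : B U V = B U W * B V W / B W W := by
    field_simp
    linear_combination hperp
  simp only [projQuadrance, huv]
  rw [hsym V W, hsym U W]
  field_simp
  ring
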